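/- The only finite-dimensional associative division algebras over the real numbers are (up to isomorphism) the real numbers ℝ, the complex numbers ℂ, and the quaternions ℍ (Frobenius theorem). -/

import Mathlib

/-!
Every `x ∈ D` is a root of a real quadratic, because irreducible real polynomials have degree at
most two. Completing the square gives `D = ℝ ⊕ V`, where `V = {v | IsImaginary v}` is the set of
elements whose square is a nonpositive real (Palais). For independent `x, y ∈ V` the sum
`(x + y)² + (x - y)² = 2x² + 2y²` is real, which forces the quadratic of `x + y` to have no linear
term, so `V` is a subspace; polarising, `u v + v u` is real for `u, v ∈ V`. Hence the centralizer of
any `i` with `i² = -1` is `ℝ + ℝ i`. If `V = 0` then `D = ℝ`; if `i` is central then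
`D = ℝ + ℝ i ≅ ℂ`. Otherwise the part `x + i x i` of some `x` anticommutes with `i`, lies in `V`,
and rescales to `j` with `j² = -1`; writing any `x` as its commuting part plus its anticommuting
part, which becomes commuting after right multiplication by `j`, shows that `1, i, j, i j` span
`D`, so `D ≅ ℍ`.
-/

open Polynomial in
theorem IsIntegral.exists_mul_self_eq_smul_add_smul_one {A : Type*} [Ring A] [IsDomain A]
    [Algebra ℝ A] {x : A} (hx : IsIntegral ℝ x) : ∃ t n : ℝ, x * x = t • x + n • 1 := by
  have hdeg : (X ^ 2 %ₘ minpoly ℝ x).natDegree ≤ 1 := by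
    have := natDegree_modByMonic_lt (X ^ 2) (minpoly.monic hx) (minpoly.ne_one ℝ x)
    have := (minpoly.irreducible hx).natDegree_le_two
    omega
  obtain ⟨t, n, hq⟩ := exists_eq_X_add_C_of_natDegree_le_one hdeg
  have hroot := aeval_modByMonic_eq_self_of_root (p := X ^ 2) (minpoly.aeval ℝ x)
  rw [hq] at hroot
  exact ⟨t, n, by simpa [sq, Algebra.algebraMap_eq_smul_one] using hroot.symm⟩

theorem eq_smul_add_smul_of_smul_add_smul_eq {K M : Type*} [Field K] [AddCommGroup M]
    [Module K M] {e x y : M} {b c m : K} (hc : c ≠ 0) (h : b • x + c • y = m • e) :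
    y = (m / c) • e + (-b / c) • x := by
  apply smul_right_injective M hc
  simp only [smul_add, smul_smul, mul_div_cancel₀ _ hc]
  linear_combination (norm := module) h

section Anticommute

variable {R : Type*} [Ring R] {i : R}

theorem commute_sub_mul_mul (hi : i * i = -1) (x : R) : Commute (x - i * x * i) i := by
  simp only [Commute, SemiconjBy, sub_mul, mul_sub, mul_assoc, hi]
  simp only [← mul_assoc, hi]
  noncomm_ring

theorem add_mul_mul_mul_eq_neg (hi : i * i = -1) (x : R) :
    (x + i * x * i) * i = -(i * (x + i * x * i)) := by
  simp only [add_mul, mul_add, mul_assoc, hi]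
  simp only [← mul_assoc, hi]
  noncomm_ring

end Anticommute

section Imaginary

variable {D : Type*} [DivisionRing D] [Algebra ℝ D]

def IsImaginary (x : D) : Prop := ∃ r : ℝ, r ≤ 0 ∧ x * x = r • 1

theorem isImaginary_zero : IsImaginary (0 : D) := ⟨0, le_rfl, by simp⟩

theorem isImaginary_of_mul_self_eq_neg_one {x : D} (h : x * x = -1) : IsImaginary x :=
  ⟨-1, by norm_num, by rw [h, neg_one_smul]⟩

theorem IsImaginary.smul {x : D} (hx : IsImaginary x) (c : ℝ) : IsImaginary (c • x) := by
  obtain ⟨r, hr, hxx⟩ := hx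
  refine ⟨c * c * r, mul_nonpos_of_nonneg_of_nonpos (mul_self_nonneg c) hr, ?_⟩
  rw [smul_mul_smul_comm, hxx, smul_smul]

theorem isImaginary_smul_one_iff {s : ℝ} : IsImaginary (s • (1 : D)) ↔ s = 0 := by
  refine ⟨fun ⟨r, hr, h⟩ ↦ ?_, fun h ↦ by simp [h, isImaginary_zero]⟩
  rw [smul_mul_smul_comm, one_mul] at h
  have := smul_left_injective ℝ (one_ne_zero (α := D)) h
  nlinarith

theorem exists_eq_smul_one_of_mul_self_eq_smul_one {x : D} {n : ℝ} (hn : 0 ≤ n)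
    (h : x * x = n • 1) : ∃ s : ℝ, x = s • 1 := by
  have hfac : (x - √n • 1) * (x + √n • 1) = 0 := by
    simp only [sub_mul, mul_add, mul_smul_comm, smul_mul_assoc, one_mul, mul_one, h]
    match_scalars <;> simp [Real.mul_self_sqrt hn]
  rcases mul_eq_zero.mp hfac with h | h
  · exact ⟨√n, sub_eq_zero.mp h⟩
  · exact ⟨-√n, by rw [neg_smul]; exact eq_neg_of_add_eq_zero_left h⟩

theorem IsImaginary.eq_zero_of_eq_smul_one_add_smul {x y : D} (hx : IsImaginary x)
    (hy : IsImaginary y) {α β : ℝ} (h : y = α • 1 + β • x) : α = 0 := by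
  by_contra hα
  have hy_real (h' : y = α • 1) : False := hα (isImaginary_smul_one_iff.mp (h' ▸ hy))
  have hx_real (s : ℝ) (hs : x = s • 1) : False := by
    have hs0 : s = 0 := isImaginary_smul_one_iff.mp (hs ▸ hx)
    rw [hs, hs0] at h
    exact hy_real (by simpa using h)
  have hβ : β ≠ 0 := by
    rintro rfl
    exact hy_real (by simpa using h)
  obtain ⟨r, -, hxx⟩ := hx
  obtain ⟨r', -, hyy⟩ := hy
  have hlin : (2 * α * β) • x = (r' - α * α - β * β * r) • 1 := by
    rw [h] at hyy
    simp only [add_mul, mul_add, smul_mul_smul_comm, one_mul, mul_one, hxx] at hyy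
    linear_combination (norm := module) hyy
  refine hx_real ((2 * α * β)⁻¹ * (r' - α * α - β * β * r)) ?_
  rw [mul_smul, ← hlin, smul_smul, inv_mul_cancel₀ (by positivity), one_smul]

theorem IsImaginary.eq_zero_of_smul_add_smul_eq_smul_one {x y : D} (hx : IsImaginary x)
    (hy : IsImaginary y) (hxy : LinearIndependent ℝ ![x, y]) {b c m : ℝ}
    (h : b • x + c • y = m • 1) : b = 0 ∧ c = 0 := by
  suffices hm : m = 0 from LinearIndependent.pair_iff.mp hxy b c (by simpa [hm] using h)
  by_cases hc : c = 0
  · by_cases hb : b = 0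
    · simpa [hb, hc] using h.symm
    · rw [add_comm] at h
      have := hy.eq_zero_of_eq_smul_one_add_smul hx (eq_smul_add_smul_of_smul_add_smul_eq hb h)
      simpa [hb] using this
  · have := hx.eq_zero_of_eq_smul_one_add_smul hy (eq_smul_add_smul_of_smul_add_smul_eq hc h)
    simpa [hc] using this

theorem IsImaginary.exists_smul_mul_self_eq_neg_one {v : D} (hv : IsImaginary v) (hv0 : v ≠ 0) :
    ∃ c : ℝ, (c • v) * (c • v) = -1 := by
  obtain ⟨r, hr, hvv⟩ := hv
  have hr0 : r ≠ 0 := by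
    rintro rfl
    simp [hv0] at hvv
  refine ⟨(√(-r))⁻¹, ?_⟩
  rw [smul_mul_smul_comm, hvv, smul_smul, ← mul_inv, Real.mul_self_sqrt (by linarith),
    inv_neg, neg_mul, inv_mul_cancel₀ hr0, neg_one_smul]

variable [Algebra.IsIntegral ℝ D]

theorem IsImaginary.add {x y : D} (hx : IsImaginary x) (hy : IsImaginary y) :
    IsImaginary (x + y) := by
  by_cases hxy : LinearIndependent ℝ ![x, y]
  swap
  · simp only [linearIndependent_fin2, Matrix.cons_val_one, Matrix.cons_val_zero, ne_eq,
      not_and_or, not_not, not_forall] at hxy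
    obtain rfl | ⟨a, rfl⟩ := hxy
    · simpa using hx
    · simpa [add_smul] using hy.smul (a + 1)
  obtain ⟨rx, -, hxx⟩ := id hx
  obtain ⟨ry, -, hyy⟩ := id hy
  obtain ⟨t, n, hp⟩ :=
    (Algebra.IsIntegral.isIntegral (R := ℝ) (x + y)).exists_mul_self_eq_smul_add_smul_one
  obtain ⟨t', n', hm⟩ :=
    (Algebra.IsIntegral.isIntegral (R := ℝ) (x - y)).exists_mul_self_eq_smul_add_smul_one
  have hsum : (t + t') • x + (t - t') • y = (2 * rx + 2 * ry - n - n') • 1 := by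
    simp only [add_mul, mul_add, sub_mul, mul_sub, hxx, hyy] at hp hm
    linear_combination (norm := module) -hp - hm
  obtain ⟨h₁, h₂⟩ := hx.eq_zero_of_smul_add_smul_eq_smul_one hy hxy hsum
  obtain rfl : t = 0 := by linarith
  refine ⟨n, not_lt.mp fun hn ↦ ?_, by simpa using hp⟩
  obtain ⟨s, hs⟩ := exists_eq_smul_one_of_mul_self_eq_smul_one hn.le (by simpa using hp)
  have := hx.eq_zero_of_smul_add_smul_eq_smul_one hy hxy (b := 1) (c := 1) (by simpa using hs)
  simp at this

theorem exists_eq_smul_one_add_isImaginary (x : D) :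
    ∃ r : ℝ, ∃ v : D, IsImaginary v ∧ x = r • 1 + v := by
  obtain ⟨t, n, hx⟩ :=
    (Algebra.IsIntegral.isIntegral (R := ℝ) x).exists_mul_self_eq_smul_add_smul_one
  have hv : (x - (t / 2) • 1) * (x - (t / 2) • 1) = (n + t ^ 2 / 4) • 1 := by
    simp only [sub_mul, mul_sub, mul_smul_comm, smul_mul_assoc, one_mul, mul_one, hx]
    module
  rcases le_or_gt (n + t ^ 2 / 4) 0 with hn | hn
  · exact ⟨t / 2, _, ⟨_, hn, hv⟩, by abel⟩
  · obtain ⟨s, hs⟩ := exists_eq_smul_one_of_mul_self_eq_smul_one hn.le hv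
    exact ⟨t / 2 + s, 0, isImaginary_zero, by rw [add_zero, add_smul, ← hs]; abel⟩

theorem IsImaginary.exists_mul_add_mul_eq_smul_one {u v : D} (hu : IsImaginary u)
    (hv : IsImaginary v) : ∃ s : ℝ, u * v + v * u = s • 1 := by
  obtain ⟨ru, -, huu⟩ := id hu
  obtain ⟨rv, -, hvv⟩ := id hv
  obtain ⟨r, -, h⟩ := hu.add hv
  refine ⟨r - ru - rv, ?_⟩
  simp only [add_mul, mul_add, huu, hvv] at h
  linear_combination (norm := module) h

theorem exists_eq_smul_one_add_smul_of_commute {i y : D} (hi : i * i = -1) (hy : Commute y i) :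
    ∃ a b : ℝ, y = a • 1 + b • i := by
  obtain ⟨r, v, hv, rfl⟩ := exists_eq_smul_one_add_isImaginary y
  obtain ⟨s, hs⟩ := hv.exists_mul_add_mul_eq_smul_one (isImaginary_of_mul_self_eq_neg_one hi)
  have hvi : Commute v i := by
    simpa using hy.sub_left ((Commute.one_left i).smul_left r)
  have h2 : v * i = (s / 2) • 1 := by
    rw [← hvi.eq] at hs
    linear_combination (norm := module) (1 / 2 : ℝ) • hs
  refine ⟨r, -(s / 2), ?_⟩
  have hv' : v = -((v * i) * i) := by rw [mul_assoc, hi]; simp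
  rw [hv', h2]
  simp

theorem IsImaginary.of_mul_eq_neg_mul {i a : D} (hi : i * i = -1) (ha : a * i = -(i * a)) :
    IsImaginary a := by
  obtain ⟨r, v, hv, rfl⟩ := exists_eq_smul_one_add_isImaginary a
  obtain ⟨s, hs⟩ := hv.exists_mul_add_mul_eq_smul_one (isImaginary_of_mul_self_eq_neg_one hi)
  obtain rfl : r = 0 := by
    by_contra hr
    have hreal : i = (-s / (2 * r)) • 1 := by
      apply smul_right_injective D (mul_ne_zero two_ne_zero hr)
      simp only [smul_smul, mul_div_cancel₀ _ (mul_ne_zero two_ne_zero hr)]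
      simp only [add_mul, mul_add, smul_mul_assoc, mul_smul_comm, one_mul, mul_one] at ha
      linear_combination (norm := module) ha - hs
    have hi0 := isImaginary_smul_one_iff.mp (hreal ▸ isImaginary_of_mul_self_eq_neg_one hi)
    rw [hreal, hi0] at hi
    simp at hi
  simpa using hv

theorem exists_mul_self_eq_neg_one_and_mul_eq_neg_mul {i x : D} (hi : i * i = -1)
    (hx : ¬Commute x i) : ∃ j : D, j * j = -1 ∧ j * i = -(i * j) := by
  have ha := add_mul_mul_mul_eq_neg hi x
  have ha0 : x + i * x * i ≠ 0 := by
    intro h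
    refine hx ?_
    have : x = (2 : ℝ)⁻¹ • (x - i * x * i) := by
      linear_combination (norm := module) (2 : ℝ)⁻¹ • h
    rw [this]
    exact (commute_sub_mul_mul hi x).smul_left _
  obtain ⟨c, hc⟩ := (IsImaginary.of_mul_eq_neg_mul hi ha).exists_smul_mul_self_eq_neg_one ha0
  refine ⟨_, hc, ?_⟩
  rw [smul_mul_assoc, ha, mul_smul_comm, smul_neg]

theorem exists_eq_smul_one_add_smul_add_smul_add_smul {i j : D} (hi : i * i = -1)
    (hj : j * j = -1) (hji : j * i = -(i * j)) (x : D) :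
    ∃ a b c d : ℝ, x = a • 1 + b • i + c • j + d • (i * j) := by
  set z := x + i * x * i
  have hzj : Commute (z * j) i := by
    rw [Commute, SemiconjBy, mul_assoc, hji, mul_neg, ← mul_assoc, add_mul_mul_mul_eq_neg hi,
      neg_mul, neg_neg, mul_assoc]
  obtain ⟨a, b, hab⟩ := exists_eq_smul_one_add_smul_of_commute hi (commute_sub_mul_mul hi x)
  obtain ⟨c, d, hcd⟩ := exists_eq_smul_one_add_smul_of_commute hi hzj
  have hz : z = -((z * j) * j) := by rw [mul_assoc, hj]; simp
  refine ⟨a / 2, b / 2, -c / 2, -d / 2, ?_⟩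
  calc x = (2 : ℝ)⁻¹ • ((x - i * x * i) + z) := by module
    _ = _ := by
      rw [hab, hz, hcd]
      simp only [add_mul, smul_mul_assoc, one_mul]
      module

theorem nonempty_algEquiv_real_of_forall_isImaginary (h : ∀ v : D, IsImaginary v → v = 0) :
    Nonempty (D ≃ₐ[ℝ] ℝ) := by
  refine ⟨(AlgEquiv.ofBijective (Algebra.ofId ℝ D) ⟨(algebraMap ℝ D).injective, fun x ↦ ?_⟩).symm⟩
  obtain ⟨r, v, hv, rfl⟩ := exists_eq_smul_one_add_isImaginary x
  exact ⟨r, by simp [h v hv, Algebra.algebraMap_eq_smul_one]⟩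

theorem nonempty_algEquiv_complex_of_forall_commute {i : D} (hi : i * i = -1)
    (h : ∀ x : D, Commute x i) : Nonempty (D ≃ₐ[ℝ] ℂ) := by
  refine ⟨(AlgEquiv.ofBijective (Complex.liftAux i hi) ⟨RingHom.injective _, fun x ↦ ?_⟩).symm⟩
  obtain ⟨a, b, rfl⟩ := exists_eq_smul_one_add_smul_of_commute hi (h x)
  exact ⟨⟨a, b⟩, by simp [Complex.liftAux_apply, Algebra.algebraMap_eq_smul_one]⟩

theorem nonempty_algEquiv_quaternion {i j : D} (hi : i * i = -1) (hj : j * j = -1)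
    (hji : j * i = -(i * j)) : Nonempty (D ≃ₐ[ℝ] Quaternion ℝ) := by
  let q : QuaternionAlgebra.Basis D (-1 : ℝ) 0 (-1) :=
    { i, j, k := i * j
      i_mul_i := by simp [hi]
      j_mul_j := by simp [hj]
      i_mul_j := rfl
      j_mul_i := by simp [hji] }
  refine ⟨(AlgEquiv.ofBijective (show Quaternion ℝ →ₐ[ℝ] D from q.liftHom)
    ⟨RingHom.injective _, fun x ↦ ?_⟩).symm⟩
  obtain ⟨a, b, c, d, rfl⟩ := exists_eq_smul_one_add_smul_add_smul_add_smul hi hj hji x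
  refine ⟨⟨a, b, c, d⟩, ?_⟩
  change q.lift _ = _
  simp [q, QuaternionAlgebra.Basis.lift, Algebra.algebraMap_eq_smul_one]

end Imaginary

/-- Frobenius theorem: every finite-dimensional associative division algebra over
`ℝ` is isomorphic, as an `ℝ`-algebra, to `ℝ`, `ℂ` or the quaternions `ℍ`. -/
theorem frobenius_division_algebras
    (D : Type*) [DivisionRing D] [Algebra ℝ D] [FiniteDimensional ℝ D] :
    Nonempty (D ≃ₐ[ℝ] ℝ) ∨ Nonempty (D ≃ₐ[ℝ] ℂ) ∨
      Nonempty (D ≃ₐ[ℝ] Quaternion ℝ) := by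
  by_cases hV : ∀ v : D, IsImaginary v → v = 0
  · exact .inl (nonempty_algEquiv_real_of_forall_isImaginary hV)
  push Not at hV
  obtain ⟨v, hv, hv0⟩ := hV
  obtain ⟨c, hi⟩ := hv.exists_smul_mul_self_eq_neg_one hv0
  by_cases hcomm : ∀ x : D, Commute x (c • v)
  · exact .inr (.inl (nonempty_algEquiv_complex_of_forall_commute hi hcomm))
  obtain ⟨x, hx⟩ := not_forall.mp hcomm
  obtain ⟨j, hj, hji⟩ := exists_mul_self_eq_neg_one_and_mul_eq_neg_mul hi hx
  exact .inr (.inr (nonempty_algEquiv_quaternion hi hj hji))
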